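/- arXiv:2112.15003 — 6 statements merged into one kernel-verified Lean document; each statement's English description precedes it below -/
import Mathlib

section
/- Let K be a kernel, let d_0, …, d_m be an m-th order difference sequence with m ≥ 1, and let ℓ ≥ 1 and h ≥ 1 be integers. Then Σ_{k=−(ℓ+mh)}^{ℓ+mh} K_diff(k/ℓ) = 0, i.e. the differencing kernel weights sum to zero. -/
/-- `δ_s = ∑_{j=|s|}^m d_j d_{j-|s|}` for `|s| ≤ m`, and `δ_s = 0` for `|s| > m`. -/
noncomputable def delta (d : ℕ → ℝ) (m : ℕ) (s : ℤ) : ℝ :=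
  if s.natAbs ≤ m then ∑ j ∈ Finset.Icc s.natAbs m, d j * d (j - s.natAbs) else 0

/-- The differencing kernel
`K_diff(t) = ∑_{s=⌈-(1+t)/λ⌉}^{⌊(1-t)/λ⌋} δ_{|s|} K(t + λ s)` with `λ = h/ℓ`. -/
noncomputable def Kdiff (K : ℝ → ℝ) (d : ℕ → ℝ) (m ℓ h : ℕ) (t : ℝ) : ℝ :=
  ∑ s ∈ Finset.Icc ⌈(-(1 + t)) / ((h : ℝ) / (ℓ : ℝ))⌉ ⌊(1 - t) / ((h : ℝ) / (ℓ : ℝ))⌋,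
    delta d m |s| * K (t + ((h : ℝ) / (ℓ : ℝ)) * (s : ℝ))

/-!
Since `K` vanishes outside `(-1, 1)` and `δ` outside `[-m, m]`, the summation range in `K_diff` can
be replaced by `s ∈ [-m, m]`. Exchanging the two sums, `K(k/ℓ + λ s) = K((k + h s)/ℓ)`, so for each
`s` the inner sum over `k` is a shift of `∑_{|j| ≤ ℓ} K(j/ℓ)`, the window `|k| ≤ ℓ + m h` being wide
enough to contain every shifted support. Hence the total is `(∑_s δ_s) · ∑_{|j| ≤ ℓ} K(j/ℓ)`, and
`∑_s δ_s = (∑_j d_j)² = 0`.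
-/

open Finset Function

lemma Finset.sum_eq_sum_of_support_subset {ι M : Type*} [AddCommMonoid M] {f : ι → M}
    {s t : Finset ι} (hs : support f ⊆ s) (ht : support f ⊆ t) :
    ∑ i ∈ s, f i = ∑ i ∈ t, f i :=
  (finsum_eq_sum_of_support_subset f hs).symm.trans (finsum_eq_sum_of_support_subset f ht)

lemma delta_eq_zero_of_lt {d : ℕ → ℝ} {m : ℕ} {s : ℤ} (hs : m < s.natAbs) : delta d m s = 0 :=
  if_neg hs.not_ge

lemma sum_delta_eq_sq (d : ℕ → ℝ) (m : ℕ) :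
    ∑ s ∈ Icc (-(m : ℤ)) m, delta d m |s| = (∑ j ∈ range (m + 1), d j) ^ 2 := by
  have hdelta : ∀ s ∈ Icc (-(m : ℤ)) m,
      delta d m |s| = ∑ j ∈ Icc s.natAbs m, d j * d (j - s.natAbs) := by
    intro s hs
    rw [mem_Icc] at hs
    rw [delta, Int.natAbs_abs, if_pos (by omega)]
  rw [sum_congr rfl hdelta, sq, sum_mul_sum, ← sum_product', sum_sigma']
  -- the pair `(i, j)` is recorded by its offset `s = i - j` and its larger index `max i j`
  refine sum_nbij' (fun p => if 0 ≤ p.1 then (p.2, p.2 - p.1.natAbs) else (p.2 - p.1.natAbs, p.2))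
    (fun q => ⟨(q.1 : ℤ) - q.2, max q.1 q.2⟩) ?_ ?_ ?_ ?_ ?_
  · rintro ⟨s, j⟩ hp
    simp only [mem_sigma, mem_Icc] at hp
    split_ifs <;> simp only [mem_product, mem_range] <;> omega
  · rintro ⟨i, j⟩ hq
    simp only [mem_product, mem_range] at hq
    simp only [mem_sigma, mem_Icc]
    omega
  · rintro ⟨s, j⟩ hp
    simp only [mem_sigma, mem_Icc] at hp
    dsimp only
    split_ifs <;> simp only [Sigma.mk.injEq, heq_eq_eq] <;> omega
  · rintro ⟨i, j⟩ -
    dsimp only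
    split_ifs <;> simp only [Prod.mk.injEq] <;> omega
  · rintro ⟨s, j⟩ -
    split_ifs
    · rfl
    · exact mul_comm _ _

section Kernel

variable {K : ℝ → ℝ} (hKsupp : ∀ t : ℝ, 1 ≤ |t| → K t = 0)
include hKsupp

lemma abs_lt_one_of_apply_ne_zero {t : ℝ} (ht : K t ≠ 0) : |t| < 1 :=
  not_le.mp fun h => ht (hKsupp t h)

lemma Kdiff_eq_sum_Icc (d : ℕ → ℝ) {m ℓ h : ℕ} (hℓ : 0 < ℓ) (hh : 0 < h) (t : ℝ) :
    Kdiff K d m ℓ h t =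
      ∑ s ∈ Icc (-(m : ℤ)) m, delta d m |s| * K (t + ((h : ℝ) / ℓ) * s) := by
  have hlam : (0 : ℝ) < (h : ℝ) / ℓ := by positivity
  refine sum_eq_sum_of_support_subset (fun s hs => ?_) (fun s hs => ?_)
  · have hK := abs_lt_one_of_apply_ne_zero hKsupp (right_ne_zero_of_mul hs)
    rw [abs_lt] at hK
    rw [coe_Icc, Set.mem_Icc, Int.ceil_le, Int.le_floor, div_le_iff₀ hlam, le_div_iff₀ hlam]
    constructor <;> linarith
  · have hδ := left_ne_zero_of_mul hs
    rw [coe_Icc, Set.mem_Icc]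
    by_contra hout
    exact hδ (delta_eq_zero_of_lt (by rw [Int.natAbs_abs]; omega))

lemma sum_Icc_shift_eq {ℓ n : ℕ} (hℓ : 0 < ℓ) {c : ℤ} (hc : |c| ≤ n) :
    ∑ k ∈ Icc (-(ℓ + n : ℤ)) (ℓ + n), K ((k + c : ℤ) / ℓ) = ∑ j ∈ Icc (-(ℓ : ℤ)) ℓ, K (j / ℓ) := by
  trans ∑ j ∈ Icc (-(ℓ + n : ℤ) + c) (ℓ + n + c), K (j / ℓ)
  · rw [← map_add_right_Icc, sum_map]
    rfl
  rw [abs_le] at hc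
  refine sum_eq_sum_of_support_subset (fun j hj => ?_) (fun j hj => ?_) <;>
  · have hK := abs_lt_one_of_apply_ne_zero hKsupp hj
    rw [abs_div, Nat.abs_cast, div_lt_one (by positivity), ← Int.cast_abs, ← Int.cast_natCast,
      Int.cast_lt, abs_lt] at hK
    rw [coe_Icc, Set.mem_Icc]
    omega

end Kernel

theorem stmt2_general (K : ℝ → ℝ)
    (hKsupp : ∀ t : ℝ, 1 ≤ |t| → K t = 0)
    (m : ℕ) (d : ℕ → ℝ) (hd : ∑ j ∈ Finset.range (m + 1), d j = 0)
    (ℓ h : ℕ) (hℓ : 1 ≤ ℓ) (hh : 1 ≤ h) :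
    ∑ k ∈ Finset.Icc (-(ℓ + m * h : ℤ)) ((ℓ + m * h : ℕ) : ℤ),
      Kdiff K d m ℓ h ((k : ℝ) / (ℓ : ℝ)) = 0 := by
  have hshift : ∀ s ∈ Icc (-(m : ℤ)) m,
      ∑ k ∈ Icc (-(ℓ + m * h : ℤ)) ((ℓ + m * h : ℕ) : ℤ), K ((k : ℝ) / ℓ + (h : ℝ) / ℓ * s) =
        ∑ j ∈ Icc (-(ℓ : ℤ)) ℓ, K (j / ℓ) := by
    intro s hs
    have hc : |(h * s : ℤ)| ≤ (m * h : ℕ) := by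
      rw [mem_Icc, ← abs_le] at hs
      rw [abs_mul, Nat.abs_cast]
      push_cast
      nlinarith
    rw [← sum_Icc_shift_eq hKsupp hℓ hc]
    push_cast
    congr! 2 with k
    ring
  calc _ = ∑ s ∈ Icc (-(m : ℤ)) m, delta d m |s| *
          ∑ k ∈ Icc (-(ℓ + m * h : ℤ)) ((ℓ + m * h : ℕ) : ℤ), K ((k : ℝ) / ℓ + (h : ℝ) / ℓ * s) := by
        simp only [Kdiff_eq_sum_Icc hKsupp d hℓ hh, mul_sum]
        exact sum_comm
    _ = (∑ j ∈ range (m + 1), d j) ^ 2 * ∑ j ∈ Icc (-(ℓ : ℤ)) ℓ, K (j / ℓ) := by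
        rw [sum_congr rfl fun s hs => by rw [hshift s hs], ← sum_mul, sum_delta_eq_sq]
    _ = 0 := by rw [hd]; ring

/-- For a kernel `K`, an `m`-th order difference sequence `d_0, …, d_m`
with `m ≥ 1`, and integers `ℓ, h ≥ 1`, the differencing kernel weights sum to zero:
`∑_{k=-(ℓ+mh)}^{ℓ+mh} K_diff(k/ℓ) = 0`. -/
theorem stmt2 (K : ℝ → ℝ) (hK0 : K 0 = 1) (hKsymm : ∀ t, K (-t) = K t)
    (hKsupp : ∀ t : ℝ, 1 ≤ |t| → K t = 0)
    (m : ℕ) (hm : 1 ≤ m) (d : ℕ → ℝ) (hd : ∑ j ∈ Finset.range (m + 1), d j = 0)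
    (ℓ h : ℕ) (hℓ : 1 ≤ ℓ) (hh : 1 ≤ h) :
    ∑ k ∈ Finset.Icc (-(ℓ + m * h : ℤ)) ((ℓ + m * h : ℕ) : ℤ),
      Kdiff K d m ℓ h ((k : ℝ) / (ℓ : ℝ)) = 0 :=
  stmt2_general K hKsupp m d hd ℓ h hℓ hh
end

section
/- Fix an integer m ≥ 1 and let d_j = (−1)^j C(m,j) / √C(2m,m) for j = 0, …, m, where C(a,b) denotes the binomial coefficient. Then d_0, …, d_m is a normalized m-th order difference sequence (Σ_{j=0}^m d_j = 0 and Σ_{j=0}^m d_j² = 1), and for every integer k with 0 ≤ k ≤ m, δ_k = (−1)^k (m!)² / ((m+k)! (m−k)!). -/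
open Finset
open scoped Nat

theorem Nat.sum_range_choose_mul_choose_add (m n k : ℕ) (hk : k ≤ n) :
    ∑ i ∈ range (n - k + 1), m.choose i * n.choose (k + i) = (m + n).choose (n - k) := by
  rw [Nat.add_choose_eq, Nat.sum_antidiagonal_eq_sum_range_succ_mk]
  refine sum_congr rfl fun i hi => ?_
  rw [mem_range] at hi
  rw [← Nat.choose_symm (by omega : k + i ≤ n)]
  congr 2
  omega

theorem Nat.cast_choose_two_mul_sub_div_cast_choose_two_mul {K : Type*} [Field K] [CharZero K]
    {m k : ℕ} (hk : k ≤ m) :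
    ((2 * m).choose (m - k) : K) / (2 * m).choose m
      = (m ! : K) ^ 2 / ((m + k)! * (m - k)!) := by
  rw [Nat.cast_choose K (by omega : m - k ≤ 2 * m), Nat.cast_choose K (by omega : m ≤ 2 * m),
    show 2 * m - (m - k) = m + k by omega, show 2 * m - m = m by omega]
  have hfac : ((2 * m)! : K) ≠ 0 := Nat.cast_ne_zero.2 (Nat.factorial_ne_zero _)
  field_simp

theorem delta_natCast_of_le (d : ℕ → ℝ) {m k : ℕ} (hk : k ≤ m) :
    delta d m k = ∑ i ∈ range (m - k + 1), d (k + i) * d i := by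
  rw [delta, Int.natAbs_natCast, if_pos hk, ← Ico_add_one_right_eq_Icc, sum_Ico_eq_sum_range,
    show m + 1 - k = m - k + 1 by omega]
  simp only [Nat.add_sub_cancel_left]

section BinomialDifference

variable {m : ℕ} {d : ℕ → ℝ}

theorem sum_range_eq_zero_of_binomial (hm : m ≠ 0)
    (hd : ∀ j ≤ m, d j = (-1) ^ j * m.choose j / √((2 * m).choose m)) :
    ∑ j ∈ range (m + 1), d j = 0 := by
  have halt : ∑ j ∈ range (m + 1), (-1 : ℝ) ^ j * m.choose j = 0 := by
    exact_mod_cast Int.alternating_sum_range_choose_of_ne hm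
  rw [sum_congr rfl fun j hj => hd j (Nat.lt_succ_iff.1 (mem_range.1 hj)), ← sum_div, halt,
    zero_div]

theorem sum_range_mul_shift_of_binomial
    (hd : ∀ j ≤ m, d j = (-1) ^ j * m.choose j / √((2 * m).choose m)) {k : ℕ} (hk : k ≤ m) :
    ∑ i ∈ range (m - k + 1), d (k + i) * d i
      = (-1) ^ k * (2 * m).choose (m - k) / (2 * m).choose m := by
  have hsign : ∀ i, (-1 : ℝ) ^ (k + i) * (-1) ^ i = (-1) ^ k := fun i => by
    rw [pow_add, mul_assoc, ← mul_pow]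
    norm_num
  calc ∑ i ∈ range (m - k + 1), d (k + i) * d i
      = ∑ i ∈ range (m - k + 1),
          (-1) ^ k * ((m.choose i * m.choose (k + i) : ℕ) : ℝ) / (2 * m).choose m := by
        refine sum_congr rfl fun i hi => ?_
        rw [mem_range] at hi
        rw [hd _ (by omega), hd _ (by omega), div_mul_div_comm,
          Real.mul_self_sqrt (Nat.cast_nonneg _), ← hsign i]
        push_cast
        ring
    _ = (-1) ^ k * (2 * m).choose (m - k) / (2 * m).choose m := by
        rw [← sum_div, ← mul_sum, ← Nat.cast_sum, Nat.sum_range_choose_mul_choose_add m m k hk,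
          two_mul]

end BinomialDifference

/-- the binomial differencing sequence
`d_j = (-1)^j C(m,j) / √C(2m,m)`, `j = 0, …, m`, is a normalized `m`-th order
difference sequence, and `δ_k = (-1)^k (m!)² / ((m+k)! (m-k)!)` for `0 ≤ k ≤ m`. -/
theorem stmt7 (m : ℕ) (hm : 1 ≤ m) (d : ℕ → ℝ)
    (hd : ∀ j : ℕ, j ≤ m →
      d j = (-1 : ℝ) ^ j * (m.choose j : ℝ) / Real.sqrt (((2 * m).choose m : ℝ))) :
    (∑ j ∈ Finset.range (m + 1), d j = 0) ∧
    (∑ j ∈ Finset.range (m + 1), (d j) ^ 2 = 1) ∧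
    (∀ k : ℕ, k ≤ m → delta d m (k : ℤ)
        = (-1 : ℝ) ^ k * (m.factorial : ℝ) ^ 2
            / (((m + k).factorial : ℝ) * ((m - k).factorial : ℝ))) := by
  have hcentral : ((2 * m).choose m : ℝ) ≠ 0 := Nat.cast_ne_zero.2 (Nat.choose_pos (by omega)).ne'
  refine ⟨sum_range_eq_zero_of_binomial (by omega) hd, ?_, fun k hk => ?_⟩
  · simpa [sq, div_self hcentral] using sum_range_mul_shift_of_binomial hd (Nat.zero_le m)
  · rw [delta_natCast_of_le d hk, sum_range_mul_shift_of_binomial hd hk, mul_div_assoc,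
      Nat.cast_choose_two_mul_sub_div_cast_choose_two_mul hk, mul_div_assoc]
end

section
/- Fix an integer m ≥ 1 and let d_0 = √(m/(m+1)) and d_j = −1/√(m² + m) for j = 1, …, m. Then d_0, …, d_m is a normalized m-th order difference sequence (Σ_{j=0}^m d_j = 0 and δ_0 = Σ_{j=0}^m d_j² = 1), δ_k = −k/(m² + m) for every 1 ≤ k ≤ m, and Δ_m = Σ_{s=−m}^{m} δ_s² = 1 + (2m+1)/(3m(m+1)). -/
lemma sum_sym (G : ℕ → ℝ) (n : ℕ) :
    ∑ s ∈ Finset.Icc (-(n : ℤ)) (n : ℤ), G s.natAbs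
      = G 0 + 2 * ∑ k ∈ Finset.Icc 1 n, G k := by
  induction n with
  | zero => simp
  | succ n ih =>
    have hset : Finset.Icc (-((n+1 : ℕ) : ℤ)) ((n+1 : ℕ) : ℤ)
        = insert (-((n:ℤ)+1)) (insert ((n:ℤ)+1) (Finset.Icc (-(n:ℤ)) (n:ℤ))) := by
      ext x
      simp only [Finset.mem_Icc, Finset.mem_insert]
      push_cast
      omega
    rw [hset, Finset.sum_insert (by simp only [Finset.mem_Icc, Finset.mem_insert]; omega),
      Finset.sum_insert (by simp only [Finset.mem_Icc]; omega), ih,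
      show Finset.Icc 1 (n+1) = insert (n+1) (Finset.Icc 1 n) by
        ext x; simp only [Finset.mem_Icc, Finset.mem_insert]; omega,
      Finset.sum_insert (by simp only [Finset.mem_Icc]; omega)]
    have h1 : (-((n:ℤ)+1)).natAbs = n + 1 := by omega
    have h2 : ((n:ℤ)+1).natAbs = n + 1 := by omega
    rw [h1, h2]; ring

lemma sum_squares (n : ℕ) :
    ∑ k ∈ Finset.Icc 1 n, (k : ℝ)^2 = n * (n+1) * (2*n+1) / 6 := by
  induction n with
  | zero => simp
  | succ n ih =>
    rw [show Finset.Icc 1 (n+1) = insert (n+1) (Finset.Icc 1 n) by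
        ext x; simp only [Finset.mem_Icc, Finset.mem_insert]; omega,
      Finset.sum_insert (by simp only [Finset.mem_Icc]; omega), ih]
    push_cast; ring

/-- the local differencing sequence `d_0 = √(m/(m+1))`,
`d_j = -1/√(m² + m)` for `j = 1, …, m`, is a normalized `m`-th order difference
sequence, `δ_k = -k/(m² + m)` for `1 ≤ k ≤ m`, and
`Δ_m = ∑_{s=-m}^{m} δ_s² = 1 + (2m+1)/(3m(m+1))`. -/
theorem stmt8 (m : ℕ) (hm : 1 ≤ m) (d : ℕ → ℝ)
    (hd0 : d 0 = Real.sqrt ((m : ℝ) / ((m : ℝ) + 1)))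
    (hdj : ∀ j : ℕ, 1 ≤ j → j ≤ m → d j = -1 / Real.sqrt ((m : ℝ) ^ 2 + (m : ℝ))) :
    (∑ j ∈ Finset.range (m + 1), d j = 0) ∧
    delta d m 0 = 1 ∧
    (∀ k : ℕ, 1 ≤ k → k ≤ m →
      delta d m (k : ℤ) = -(k : ℝ) / ((m : ℝ) ^ 2 + (m : ℝ))) ∧
    ∑ s ∈ Finset.Icc (-(m : ℤ)) (m : ℤ), (delta d m s) ^ 2
      = 1 + (2 * (m : ℝ) + 1) / (3 * (m : ℝ) * ((m : ℝ) + 1)) := by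
  have hm1 : (1 : ℝ) ≤ (m : ℝ) := by exact_mod_cast hm
  have hmpos : (0 : ℝ) < m := by linarith
  have hq : (0 : ℝ) < (m : ℝ)^2 + m := by nlinarith
  set b : ℝ := Real.sqrt ((m : ℝ) ^ 2 + (m : ℝ)) with hb
  have hbpos : 0 < b := Real.sqrt_pos.mpr hq
  have hb2 : b ^ 2 = (m : ℝ)^2 + m := Real.sq_sqrt hq.le
  have hd0b : d 0 = (m : ℝ) / b := by
    rw [hd0, eq_div_iff hbpos.ne', hb, ← Real.sqrt_mul (by positivity)]
    rw [show (m : ℝ) / ((m:ℝ)+1) * ((m : ℝ)^2 + m) = (m:ℝ)^2 by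
      field_simp]
    exact Real.sqrt_sq hmpos.le
  have hterm : (-1/b) * (-1/b) = 1/b^2 := by
    field_simp
  -- part 1
  have part1 : ∑ j ∈ Finset.range (m + 1), d j = 0 := by
    rw [Finset.sum_range_succ' d m]
    have : ∑ i ∈ Finset.range m, d (i + 1) = m * (-1 / b) := by
      rw [Finset.sum_congr rfl (fun i hi => hdj (i+1) (by omega)
        (by simp at hi; omega)), Finset.sum_const, Finset.card_range,
        nsmul_eq_mul]
    rw [this, hd0b]
    field_simp
    ring
  -- part 2
  have part2 : delta d m 0 = 1 := by
    unfold delta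
    rw [if_pos (by simp)]
    simp only [Int.natAbs_zero, Nat.sub_zero]
    rw [show Finset.Icc 0 m = Finset.range (m+1) by
      ext x; simp]
    rw [Finset.sum_range_succ' (fun j => d j * d j) m]
    have h1 : ∑ i ∈ Finset.range m, d (i+1) * d (i+1)
        = ∑ _i ∈ Finset.range m, 1/b^2 := by
      refine Finset.sum_congr rfl fun i hi => ?_
      simp only [Finset.mem_range] at hi
      rw [hdj (i+1) (by omega) (by omega)]
      exact hterm
    rw [h1, Finset.sum_const, Finset.card_range, nsmul_eq_mul, hd0b]
    rw [show (m:ℝ) * (1/b^2) + (m:ℝ)/b * ((m:ℝ)/b) = ((m:ℝ)^2 + m)/b^2 by ring,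
      hb2, div_self hq.ne']
  -- part 3
  have part3 : ∀ k : ℕ, 1 ≤ k → k ≤ m →
      delta d m (k : ℤ) = -(k : ℝ) / ((m : ℝ) ^ 2 + (m : ℝ)) := by
    intro k hk1 hkm
    unfold delta
    rw [if_pos (by simpa using hkm)]
    simp only [Int.natAbs_natCast]
    rw [show Finset.Icc k m = insert k (Finset.Icc (k+1) m) by
        ext x; simp only [Finset.mem_Icc, Finset.mem_insert]; omega,
      Finset.sum_insert (by simp only [Finset.mem_Icc]; omega)]
    have hmk : ((m - k : ℕ) : ℝ) = (m : ℝ) - k := by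
      push_cast [Nat.cast_sub hkm]; ring
    have hsum : ∑ j ∈ Finset.Icc (k+1) m, d j * d (j - k)
        = ((m : ℝ) - k) * (1 / b^2) := by
      have h1 : ∑ j ∈ Finset.Icc (k+1) m, d j * d (j - k)
          = ∑ _j ∈ Finset.Icc (k+1) m, 1/b^2 := by
        refine Finset.sum_congr rfl fun j hj => ?_
        simp only [Finset.mem_Icc] at hj
        rw [hdj j (by omega) hj.2, hdj (j - k) (by omega) (by omega)]
        exact hterm
      rw [h1, Finset.sum_const, Nat.card_Icc, nsmul_eq_mul,
        show m + 1 - (k + 1) = m - k by omega, hmk]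
    rw [hsum, Nat.sub_self, hd0b, hdj k hk1 hkm]
    rw [show -1/b * ((m:ℝ)/b) + ((m:ℝ) - k) * (1/b^2) = -(k:ℝ)/b^2 by ring, hb2]
  refine ⟨part1, part2, part3, ?_⟩
  -- part 4
  set G : ℕ → ℝ := fun k => (delta d m (k : ℤ))^2 with hG
  have hdep : ∀ s : ℤ, (delta d m s)^2 = G s.natAbs := by
    intro s
    have key : delta d m s = delta d m ((s.natAbs : ℕ) : ℤ) := by
      simp [delta, Int.natAbs_abs]
    rw [key]
  have h4 : ∑ s ∈ Finset.Icc (-(m : ℤ)) (m : ℤ), (delta d m s) ^ 2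
      = G 0 + 2 * ∑ k ∈ Finset.Icc 1 m, G k := by
    rw [Finset.sum_congr rfl (fun s _ => hdep s)]
    exact sum_sym G m
  rw [h4]
  have hG0 : G 0 = 1 := by simp only [hG, Nat.cast_zero, part2, one_pow]
  have h5 : ∑ k ∈ Finset.Icc 1 m, G k
      = ∑ k ∈ Finset.Icc 1 m, (k:ℝ)^2 / ((m:ℝ)^2+m)^2 := by
    refine Finset.sum_congr rfl fun k hk => ?_
    simp only [Finset.mem_Icc] at hk
    simp only [hG]
    rw [part3 k hk.1 hk.2, div_pow, neg_sq]
  rw [hG0, h5, ← Finset.sum_div, sum_squares]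
  have hne1 : (m:ℝ) ≠ 0 := hmpos.ne'
  have hne2 : (m:ℝ) + 1 ≠ 0 := by positivity
  have hne3 : (m:ℝ)^2 + m ≠ 0 := hq.ne'
  field_simp
  ring
end

section
/- Let q ≥ 1 be an integer, B ∈ ℝ, and let K : ℝ → ℝ satisfy K(0) = 1, K(−t) = K(t) for all t, K(t) = 0 for |t| ≥ 1, sup_{t ∈ [0,1]} |K(t)| < ∞, and lim_{t ↓ 0} (K(t) − 1)/t^q = B. Let γ : ℤ → ℝ satisfy γ_{−k} = γ_k for all k and Σ_{k=1}^{∞} k^q |γ_k| < ∞. Then, as the positive integer ℓ tends to infinity, ℓ^q Σ_{k=−ℓ}^{ℓ} (K(k/ℓ) − 1) γ_k converges to B Σ_{k ∈ ℤ} |k|^q γ_k (the latter series converging absolutely). -/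
open Filter Topology

/-- Let `q ≥ 1`, `B ∈ ℝ`, and let `K : ℝ → ℝ` satisfy `K(0) = 1`,
`K(-t) = K(t)`, `K(t) = 0` for `|t| ≥ 1`, `sup_{t ∈ [0,1]} |K(t)| < ∞`, and
`(K(t) - 1)/t^q → B` as `t ↓ 0`. Let `γ : ℤ → ℝ` be symmetric with
`∑_{k=1}^∞ k^q |γ_k| < ∞`. Then `∑_{k ∈ ℤ} |k|^q γ_k` converges absolutely, and as the
positive integer `ℓ → ∞`, `ℓ^q ∑_{k=-ℓ}^{ℓ} (K(k/ℓ) - 1) γ_k → B ∑_{k ∈ ℤ} |k|^q γ_k`. -/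
theorem stmt10 (q : ℕ) (hq : 1 ≤ q) (B : ℝ) (K : ℝ → ℝ)
    (hK0 : K 0 = 1) (hKsymm : ∀ t, K (-t) = K t)
    (hKsupp : ∀ t : ℝ, 1 ≤ |t| → K t = 0)
    (hKbdd : ∃ C : ℝ, ∀ t ∈ Set.Icc (0 : ℝ) 1, |K t| ≤ C)
    (hKlim : Tendsto (fun t : ℝ => (K t - 1) / t ^ q) (nhdsWithin 0 (Set.Ioi 0)) (nhds B))
    (γ : ℤ → ℝ) (hγsymm : ∀ k : ℤ, γ (-k) = γ k)
    (hγsum : Summable (fun k : ℕ => (k : ℝ) ^ q * |γ (k : ℤ)|)) :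
    Summable (fun k : ℤ => |(k : ℝ)| ^ q * γ k) ∧
    Tendsto (fun ℓ : ℕ => (ℓ : ℝ) ^ q *
        ∑ k ∈ Finset.Icc (-(ℓ : ℤ)) (ℓ : ℤ), (K ((k : ℝ) / (ℓ : ℝ)) - 1) * γ k)
      atTop (nhds (B * ∑' k : ℤ, |(k : ℝ)| ^ q * γ k)) := by
  -- K is even
  have hKabs : ∀ x : ℝ, K |x| = K x := by
    intro x
    rcases abs_cases x with ⟨h, _⟩ | ⟨h, _⟩
    · rw [h]
    · rw [h, hKsymm]
  -- summability over ℤ of the absolute values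
  have habs : Summable (fun k : ℤ => |(k : ℝ)| ^ q * |γ k|) := by
    apply Summable.of_nat_of_neg
    · apply hγsum.congr
      intro n
      push_cast
      rw [abs_of_nonneg (by positivity : (0:ℝ) ≤ (n:ℝ))]
    · apply hγsum.congr
      intro n
      rw [hγsymm]
      push_cast
      rw [abs_neg, abs_of_nonneg (by positivity : (0:ℝ) ≤ (n:ℝ))]
  have hsum : Summable (fun k : ℤ => |(k : ℝ)| ^ q * γ k) := by
    apply Summable.of_abs
    apply habs.congr
    intro k
    rw [abs_mul, abs_pow, abs_abs]
  refine ⟨hsum, ?_⟩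
  -- a uniform bound |K t - 1| ≤ M t^q on (0,1]
  obtain ⟨C, hC⟩ := hKbdd
  have hC0 : 0 ≤ C := le_trans (abs_nonneg _) (hC 0 ⟨le_refl _, zero_le_one⟩)
  have h1 : {t : ℝ | |(K t - 1) / t ^ q - B| < 1} ∈ nhdsWithin 0 (Set.Ioi 0) := by
    have := Metric.tendsto_nhds.mp hKlim 1 one_pos
    simp only [Real.dist_eq] at this
    exact this
  obtain ⟨u, hu, hsub⟩ := mem_nhdsGT_iff_exists_Ioo_subset.mp h1
  have hu0 : (0:ℝ) < u := hu
  set d : ℝ := min u 1 with hd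
  have hd0 : 0 < d := lt_min hu0 one_pos
  set M : ℝ := max (|B| + 1) ((C + 1) / d ^ q) with hMdef
  have hM0 : 0 ≤ M := le_trans (by positivity) (le_max_left _ _)
  have hM : ∀ t ∈ Set.Ioc (0:ℝ) 1, |K t - 1| ≤ M * t ^ q := by
    intro t ⟨ht0, ht1⟩
    rcases lt_or_ge t d with h | h
    · have htu : t ∈ Set.Ioo 0 u := ⟨ht0, lt_of_lt_of_le h (min_le_left _ _)⟩
      have := hsub htu
      simp only [Set.mem_setOf_eq] at this
      have htq : (0:ℝ) < t ^ q := by positivity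
      have h2 : |(K t - 1) / t ^ q| ≤ |B| + 1 := by
        have h4 : |(K t - 1) / t ^ q| - |B| ≤ |(K t - 1) / t ^ q - B| :=
          abs_sub_abs_le_abs_sub _ _
        linarith
      have : |K t - 1| = |(K t - 1) / t ^ q| * t ^ q := by
        rw [abs_div, abs_of_pos htq, div_mul_cancel₀]
        exact ne_of_gt htq
      rw [this]
      calc |(K t - 1) / t ^ q| * t ^ q ≤ (|B| + 1) * t ^ q := by
            apply mul_le_mul_of_nonneg_right h2 (le_of_lt htq)
        _ ≤ M * t ^ q := by
            apply mul_le_mul_of_nonneg_right (le_max_left _ _) (le_of_lt htq)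
    · have hdq : d ^ q ≤ t ^ q := pow_le_pow_left₀ (le_of_lt hd0) h q
      have hdq0 : (0:ℝ) < d ^ q := by positivity
      have h3 : |K t - 1| ≤ C + 1 := by
        calc |K t - 1| ≤ |K t| + 1 := by
              have := abs_sub (K t) 1
              calc |K t - 1| ≤ |K t| + |(1:ℝ)| := abs_sub _ _
                _ = |K t| + 1 := by rw [abs_one]
          _ ≤ C + 1 := by linarith [hC t ⟨le_of_lt ht0, ht1⟩]
      calc |K t - 1| ≤ C + 1 := h3
        _ = (C + 1) / d ^ q * d ^ q := by field_simp
        _ ≤ (C + 1) / d ^ q * t ^ q := by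
            apply mul_le_mul_of_nonneg_left hdq (by positivity)
        _ ≤ M * t ^ q := by
            apply mul_le_mul_of_nonneg_right (le_max_right _ _) (by positivity)
  -- the truncated summand
  set g : ℕ → ℤ → ℝ := fun ℓ k =>
    if k ∈ Finset.Icc (-(ℓ : ℤ)) (ℓ : ℤ) then (ℓ : ℝ) ^ q * ((K ((k : ℝ) / (ℓ : ℝ)) - 1) * γ k)
    else 0 with hg
  -- the target function equals ℓ ↦ ∑' k, g ℓ k
  have hfun : ∀ ℓ : ℕ, (ℓ : ℝ) ^ q *
      ∑ k ∈ Finset.Icc (-(ℓ : ℤ)) (ℓ : ℤ), (K ((k : ℝ) / (ℓ : ℝ)) - 1) * γ k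
      = ∑' k : ℤ, g ℓ k := by
    intro ℓ
    rw [tsum_eq_sum (s := Finset.Icc (-(ℓ : ℤ)) (ℓ : ℤ))
      (fun k hk => by simp only [hg, if_neg hk])]
    rw [Finset.mul_sum]
    apply Finset.sum_congr rfl
    intro k hk
    simp only [hg, if_pos hk]
  simp only [hfun]
  -- limit summand
  have htsum : B * ∑' k : ℤ, |(k : ℝ)| ^ q * γ k
      = ∑' k : ℤ, B * (|(k : ℝ)| ^ q * γ k) := by
    rw [tsum_mul_left]
  rw [htsum]
  -- dominated convergence
  apply tendsto_tsum_of_dominated_convergence (bound := fun k : ℤ => M * (|(k : ℝ)| ^ q * |γ k|))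
      (habs.mul_left M)
  · -- pointwise convergence
    intro k
    rcases eq_or_ne k 0 with rfl | hk
    · have : ∀ ℓ : ℕ, g ℓ 0 = 0 := by
        intro ℓ
        simp only [hg]
        rcases Nat.eq_zero_or_pos ℓ with rfl | hl
        · simp [zero_pow (by omega : q ≠ 0)]
        · rw [if_pos (by simp only [Finset.mem_Icc]; omega)]
          norm_num [hK0]
      simp only [this]
      have : B * (|((0:ℤ):ℝ)| ^ q * γ 0) = 0 := by
        simp [zero_pow (by omega : q ≠ 0)]
      rw [this]
      exact tendsto_const_nhds
    · -- k ≠ 0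
      have hk0 : (0:ℝ) < |(k : ℝ)| := by
        simp only [abs_pos]
        exact_mod_cast hk
      have hcomp : Tendsto (fun ℓ : ℕ => |(k : ℝ)| / (ℓ : ℝ)) atTop
          (nhdsWithin 0 (Set.Ioi 0)) := by
        apply tendsto_nhdsWithin_of_tendsto_nhds_of_eventually_within
        · exact tendsto_const_div_atTop_nhds_zero_nat _
        · filter_upwards [eventually_ge_atTop 1] with ℓ hℓ
          have : (0:ℝ) < (ℓ:ℝ) := by exact_mod_cast hℓ
          exact div_pos hk0 this
      have hlim : Tendsto
          (fun ℓ : ℕ => (K (|(k : ℝ)| / (ℓ : ℝ)) - 1) / (|(k : ℝ)| / (ℓ : ℝ)) ^ q)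
          atTop (nhds B) := hKlim.comp hcomp
      have hlim2 : Tendsto
          (fun ℓ : ℕ => |(k : ℝ)| ^ q *
            ((K (|(k : ℝ)| / (ℓ : ℝ)) - 1) / (|(k : ℝ)| / (ℓ : ℝ)) ^ q) * γ k)
          atTop (nhds (|(k : ℝ)| ^ q * B * γ k)) :=
        ((hlim.const_mul _).mul_const _)
      have heq : B * (|(k : ℝ)| ^ q * γ k) = |(k : ℝ)| ^ q * B * γ k := by ring
      rw [heq]
      apply hlim2.congr'
      filter_upwards [eventually_ge_atTop (max 1 k.natAbs)] with ℓ hℓ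
      have hℓ1 : 1 ≤ ℓ := le_trans (le_max_left _ _) hℓ
      have hℓk : k.natAbs ≤ ℓ := le_trans (le_max_right _ _) hℓ
      have hL0 : (0:ℝ) < (ℓ:ℝ) := by exact_mod_cast hℓ1
      have hmem : k ∈ Finset.Icc (-(ℓ : ℤ)) (ℓ : ℤ) := by
        simp only [Finset.mem_Icc]
        omega
      simp only [hg, if_pos hmem]
      have hKeq : K ((k : ℝ) / (ℓ : ℝ)) = K (|(k : ℝ)| / (ℓ : ℝ)) := by
        rw [← hKabs ((k : ℝ) / (ℓ : ℝ)), abs_div, abs_of_pos hL0]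
      rw [hKeq]
      have hne : (|(k : ℝ)| / (ℓ : ℝ)) ^ q ≠ 0 := by positivity
      have hLne : (ℓ:ℝ) ≠ 0 := ne_of_gt hL0
      field_simp
      have hpow : (ℓ:ℝ) ^ q * (ℓ:ℝ)⁻¹ ^ q = 1 := by rw [← mul_pow, mul_inv_cancel₀ hLne, one_pow]
      ring_nf
      linear_combination (-(|(k:ℝ)| ^ q * K (|(k:ℝ)| * (ℓ:ℝ)⁻¹) * γ k - |(k:ℝ)| ^ q * γ k)) * hpow
  · -- the bound
    filter_upwards with ℓ
    intro k
    simp only [hg]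
    split_ifs with hmem
    · rcases eq_or_ne k 0 with rfl | hk
      · rcases Nat.eq_zero_or_pos ℓ with rfl | hl
        · simp only [Nat.cast_zero, zero_pow (by omega : q ≠ 0), zero_mul, norm_zero,
            Int.cast_zero, abs_zero]
          positivity
        · have : ((0:ℤ):ℝ) / (ℓ:ℝ) = 0 := by norm_num
          rw [this, hK0]
          simp only [sub_self, zero_mul, mul_zero, norm_zero]
          positivity
      · have hmem' := Finset.mem_Icc.mp hmem
        have hkl : k.natAbs ≤ ℓ := by omega
        have hℓ1 : 1 ≤ ℓ := by omega
        have hL0 : (0:ℝ) < (ℓ:ℝ) := by exact_mod_cast hℓ1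
        have hk0 : (0:ℝ) < |(k : ℝ)| := by
          simp only [abs_pos]; exact_mod_cast hk
        set t : ℝ := |(k : ℝ)| / (ℓ:ℝ) with ht
        have ht0 : 0 < t := div_pos hk0 hL0
        have ht1 : t ≤ 1 := by
          rw [ht, div_le_one hL0]
          have h6 : |(k : ℝ)| = (k.natAbs : ℝ) := by rw [Nat.cast_natAbs, Int.cast_abs]
          rw [h6]
          exact_mod_cast hkl
        have hb := hM t ⟨ht0, ht1⟩
        have hKeq : K ((k : ℝ) / (ℓ : ℝ)) = K t := by
          rw [ht, ← hKabs ((k : ℝ) / (ℓ : ℝ)), abs_div, abs_of_pos hL0]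
        rw [Real.norm_eq_abs, abs_mul, abs_mul, hKeq]
        have h5 : (ℓ:ℝ) ^ q * t ^ q = |(k : ℝ)| ^ q := by
          rw [ht, div_pow]
          field_simp
        calc |(ℓ:ℝ) ^ q| * (|K t - 1| * |γ k|)
            ≤ (ℓ:ℝ) ^ q * ((M * t ^ q) * |γ k|) := by
              rw [abs_of_nonneg (by positivity : (0:ℝ) ≤ (ℓ:ℝ) ^ q)]
              apply mul_le_mul_of_nonneg_left _ (by positivity)
              exact mul_le_mul_of_nonneg_right hb (abs_nonneg _)
          _ = M * (|(k : ℝ)| ^ q * |γ k|) := by rw [← h5]; ring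
    · simp only [norm_zero]
      positivity
end

section
/- Fix an integer q ≥ 1 and set a = 4 − (q+1)·2^q and b = q·2^{q+1} − 4. Define K̃ : ℝ → ℝ by K̃(t) = 1 − |t|^q + a|t|^{q+1} + b|t|^{q+2} for |t| ≤ 1/2, K̃(t) = (1−|t|)^q − a(1−|t|)^{q+1} − b(1−|t|)^{q+2} for 1/2 < |t| ≤ 1, and K̃(t) = 0 for |t| > 1. Then: K̃ is continuous on ℝ; K̃(0) = 1; K̃(−t) = K̃(t) for all t; K̃(t) = 0 for |t| ≥ 1; lim_{t ↓ 0} (K̃(t) − 1)/t^q = −1; and lim_{t ↓ 0} (K̃(1) − K̃(1−t))/t^q = −1. -/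
/-!
With `p(s) = s^q - a s^{q+1} - b s^{q+2}` the kernel is `1 - p(|t|)` on `|t| ≤ 1/2` and
`p(1 - |t|)` on `1/2 < |t| ≤ 1`. Both limits are then `-p(t)/t^q = -1 + a t + b t² → -1`, and the
constants `a, b` satisfy `p(1/2) = 1/2`, which glues the two pieces continuously.
-/

open Filter Topology

/-- The modified `q`-th order polynomial kernel with `a = 4 - (q+1)·2^q` and
`b = q·2^{q+1} - 4`. -/
noncomputable def Ktilde (q : ℕ) : ℝ → ℝ := fun t =>
  if |t| ≤ 1 / 2 then
    1 - |t| ^ q + (4 - ((q : ℝ) + 1) * 2 ^ q) * |t| ^ (q + 1)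
      + ((q : ℝ) * 2 ^ (q + 1) - 4) * |t| ^ (q + 2)
  else if |t| ≤ 1 then
    (1 - |t|) ^ q - (4 - ((q : ℝ) + 1) * 2 ^ q) * (1 - |t|) ^ (q + 1)
      - ((q : ℝ) * 2 ^ (q + 1) - 4) * (1 - |t|) ^ (q + 2)
  else 0

noncomputable def ktildeTail (q : ℕ) (s : ℝ) : ℝ :=
  s ^ q - (4 - ((q : ℝ) + 1) * 2 ^ q) * s ^ (q + 1) - ((q : ℝ) * 2 ^ (q + 1) - 4) * s ^ (q + 2)

theorem ktilde_eq_ite (q : ℕ) (t : ℝ) :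
    Ktilde q t = if |t| ≤ 1 / 2 then 1 - ktildeTail q |t|
      else if |t| ≤ 1 then ktildeTail q (1 - |t|) else 0 := by
  unfold Ktilde ktildeTail
  split_ifs <;> ring

theorem ktildeTail_zero {q : ℕ} (hq : q ≠ 0) : ktildeTail q 0 = 0 := by
  simp [ktildeTail, hq]

theorem ktildeTail_half (q : ℕ) : ktildeTail q (1 / 2) = 1 / 2 := by
  have h : (1 / 2 : ℝ) ^ q * 2 ^ q = 1 := by rw [← mul_pow]; norm_num
  simp only [ktildeTail, pow_succ]
  linear_combination (1 / 2 : ℝ) * h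

theorem ktildeTail_div_pow (q : ℕ) {t : ℝ} (ht : t ≠ 0) :
    ktildeTail q t / t ^ q
      = 1 - (4 - ((q : ℝ) + 1) * 2 ^ q) * t - ((q : ℝ) * 2 ^ (q + 1) - 4) * t ^ 2 := by
  rw [div_eq_iff (pow_ne_zero q ht), ktildeTail]
  ring

theorem tendsto_ktildeTail_div_pow (q : ℕ) :
    Tendsto (fun t => ktildeTail q t / t ^ q) (𝓝[≠] 0) (𝓝 1) := by
  have hpoly : Tendsto
      (fun t : ℝ => 1 - (4 - ((q : ℝ) + 1) * 2 ^ q) * t - ((q : ℝ) * 2 ^ (q + 1) - 4) * t ^ 2)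
      (𝓝[≠] 0) (𝓝 1) :=
    tendsto_nhdsWithin_of_tendsto_nhds <| Continuous.tendsto' (by fun_prop) 0 1 (by simp)
  refine hpoly.congr' ?_
  filter_upwards [self_mem_nhdsWithin] with t ht
  exact (ktildeTail_div_pow q ht).symm

theorem continuous_ktilde {q : ℕ} (hq : q ≠ 0) : Continuous (Ktilde q) := by
  rw [funext (ktilde_eq_ite q)]
  refine Continuous.if_le (by unfold ktildeTail; fun_prop) ?_ continuous_abs continuous_const ?_
  · refine Continuous.if_le (by unfold ktildeTail; fun_prop) continuous_const continuous_abs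
      continuous_const ?_
    intro t ht
    rw [ht, sub_self, ktildeTail_zero hq]
  · intro t ht
    rw [ht, if_pos (by norm_num), show (1 : ℝ) - 1 / 2 = 1 / 2 by norm_num, ktildeTail_half]
    norm_num

theorem ktilde_zero {q : ℕ} (hq : q ≠ 0) : Ktilde q 0 = 1 := by
  simp [ktilde_eq_ite, ktildeTail_zero hq]

theorem ktilde_neg (q : ℕ) (t : ℝ) : Ktilde q (-t) = Ktilde q t := by
  simp only [Ktilde, abs_neg]

theorem ktilde_of_one_le_abs {q : ℕ} (hq : q ≠ 0) {t : ℝ} (ht : 1 ≤ |t|) : Ktilde q t = 0 := by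
  rw [ktilde_eq_ite, if_neg (by linarith)]
  split_ifs with h
  · rw [le_antisymm h ht, sub_self, ktildeTail_zero hq]
  · rfl

theorem ktilde_of_mem_Ioo {q : ℕ} {t : ℝ} (ht : t ∈ Set.Ioo 0 (1 / 2)) :
    Ktilde q t = 1 - ktildeTail q t := by
  rw [ktilde_eq_ite, abs_of_pos ht.1, if_pos ht.2.le]

theorem ktilde_one_sub_of_mem_Ioo {q : ℕ} {t : ℝ} (ht : t ∈ Set.Ioo 0 (1 / 2)) :
    Ktilde q (1 - t) = ktildeTail q t := by
  obtain ⟨h0, h1⟩ := ht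
  rw [ktilde_eq_ite, abs_of_pos (by linarith), if_neg (by linarith), if_pos (by linarith),
    sub_sub_cancel]

theorem tendsto_ktilde_sub_one_div_pow (q : ℕ) :
    Tendsto (fun t => (Ktilde q t - 1) / t ^ q) (𝓝[>] 0) (𝓝 (-1)) := by
  refine ((tendsto_ktildeTail_div_pow q).neg.mono_left (nhdsGT_le_nhdsNE 0)).congr' ?_
  filter_upwards [Ioo_mem_nhdsGT (by norm_num : (0 : ℝ) < 1 / 2)] with t ht
  rw [ktilde_of_mem_Ioo ht, sub_sub_cancel_left, neg_div]

theorem tendsto_ktilde_one_sub_div_pow {q : ℕ} (hq : q ≠ 0) :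
    Tendsto (fun t => (Ktilde q 1 - Ktilde q (1 - t)) / t ^ q) (𝓝[>] 0) (𝓝 (-1)) := by
  refine ((tendsto_ktildeTail_div_pow q).neg.mono_left (nhdsGT_le_nhdsNE 0)).congr' ?_
  filter_upwards [Ioo_mem_nhdsGT (by norm_num : (0 : ℝ) < 1 / 2)] with t ht
  rw [ktilde_one_sub_of_mem_Ioo ht, ktilde_of_one_le_abs hq (by norm_num), zero_sub, neg_div]

/-- the modified `q`-th order polynomial kernel `K̃` is continuous,
`K̃(0) = 1`, `K̃(-t) = K̃(t)`, `K̃(t) = 0` for `|t| ≥ 1`,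
`(K̃(t) - 1)/t^q → -1` as `t ↓ 0`, and `(K̃(1) - K̃(1-t))/t^q → -1` as `t ↓ 0`. -/
theorem stmt13 (q : ℕ) (hq : 1 ≤ q) :
    Continuous (Ktilde q) ∧
    Ktilde q 0 = 1 ∧
    (∀ t : ℝ, Ktilde q (-t) = Ktilde q t) ∧
    (∀ t : ℝ, 1 ≤ |t| → Ktilde q t = 0) ∧
    Tendsto (fun t : ℝ => (Ktilde q t - 1) / t ^ q)
      (nhdsWithin 0 (Set.Ioi 0)) (nhds (-1)) ∧
    Tendsto (fun t : ℝ => (Ktilde q 1 - Ktilde q (1 - t)) / t ^ q)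
      (nhdsWithin 0 (Set.Ioi 0)) (nhds (-1)) := by
  have hq0 : q ≠ 0 := Nat.one_le_iff_ne_zero.mp hq
  exact ⟨continuous_ktilde hq0, ktilde_zero hq0, ktilde_neg q,
    fun _ => ktilde_of_one_le_abs hq0, tendsto_ktilde_sub_one_div_pow q,
    tendsto_ktilde_one_sub_div_pow hq0⟩
end

section
/- The sequence d_0 = (1+√5)/4, d_1 = −1/2, d_2 = (1−√5)/4 is a normalized 2nd-order difference sequence: d_0 + d_1 + d_2 = 0 and d_0² + d_1² + d_2² = 1; moreover δ_1 = d_1 d_0 + d_2 d_1 = −1/4 and δ_2 = d_2 d_0 = −1/4, so that Δ_2 = Σ_{s=−2}^{2} δ_s² = 1 + 1/4, the minimal possible value of Δ_2 among normalized 2nd-order difference sequences. -/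
open Finset

lemma sum_Icc_eq_add_two_nsmul_of_even {M : Type*} [AddCommGroup M] {f : ℤ → M} (hf : f.Even)
    (m : ℕ) : ∑ s ∈ Icc (-m : ℤ) m, f s = f 0 + 2 • ∑ s ∈ range m, f (s + 1 : ℕ) := by
  rw [sum_Icc_of_even_eq_range hf, sum_range_succ', Nat.cast_zero, smul_add, two_nsmul (f 0)]
  abel

section Autocorrelation

variable (d : ℕ → ℝ) (m : ℕ)

lemma delta_neg (s : ℤ) : delta d m (-s) = delta d m s := by
  simp only [delta, Int.natAbs_neg]

lemma delta_natCast {s : ℕ} (hs : s ≤ m) :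
    delta d m s = ∑ j ∈ Icc s m, d j * d (j - s) := by
  simp only [delta, Int.natAbs_natCast, if_pos hs]

lemma delta_zero : delta d m 0 = ∑ j ∈ range (m + 1), d j ^ 2 := by
  rw [← Nat.cast_zero, delta_natCast d m (Nat.zero_le m), Nat.range_succ_eq_Icc_zero]
  simp only [Nat.sub_zero, sq]

lemma sum_delta_succ :
    ∑ s ∈ range m, delta d m (s + 1 : ℕ) = ∑ j ∈ range (m + 1), d j * ∑ i ∈ range j, d i := by
  calc ∑ s ∈ range m, delta d m (s + 1 : ℕ)
      = ∑ s ∈ range m, ∑ j ∈ Icc (s + 1) m, d j * d (j - (s + 1)) :=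
        sum_congr rfl fun s hs ↦ delta_natCast d m (by simpa using hs)
    _ = ∑ j ∈ range (m + 1), ∑ s ∈ range j, d j * d (j - (s + 1)) := by
        refine sum_comm' fun s j ↦ ?_
        simp only [mem_range, mem_Icc]
        omega
    _ = ∑ j ∈ range (m + 1), d j * ∑ i ∈ range j, d i := by
        simp_rw [← mul_sum, add_comm _ 1, ← Nat.sub_sub, sum_range_reflect d]

lemma sq_sum_range_eq_sum_sq_add_two_mul (n : ℕ) :
    (∑ j ∈ range n, d j) ^ 2 =
      ∑ j ∈ range n, d j ^ 2 + 2 * ∑ j ∈ range n, d j * ∑ i ∈ range j, d i := by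
  induction n with
  | zero => simp
  | succ n ih => simp only [sum_range_succ]; linear_combination ih

lemma sum_Icc_delta_eq_sq_sum :
    ∑ s ∈ Icc (-m : ℤ) m, delta d m s = (∑ j ∈ range (m + 1), d j) ^ 2 := by
  rw [sum_Icc_eq_add_two_nsmul_of_even (delta_neg d m), delta_zero, sum_delta_succ,
    sq_sum_range_eq_sum_sq_add_two_mul, nsmul_eq_mul, Nat.cast_ofNat]

lemma sum_Icc_sq_delta :
    ∑ s ∈ Icc (-m : ℤ) m, delta d m s ^ 2 =
      delta d m 0 ^ 2 + 2 * ∑ s ∈ range m, delta d m (s + 1 : ℕ) ^ 2 := by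
  rw [sum_Icc_eq_add_two_nsmul_of_even (fun s ↦ by simp only [delta_neg]), nsmul_eq_mul,
    Nat.cast_ofNat]

end Autocorrelation

theorem one_add_inv_two_mul_le_sum_sq_delta {d : ℕ → ℝ} {m : ℕ} (hm : 1 ≤ m)
    (hsum : ∑ j ∈ range (m + 1), d j = 0) (hnorm : ∑ j ∈ range (m + 1), d j ^ 2 = 1) :
    1 + 1 / (2 * m) ≤ ∑ s ∈ Icc (-m : ℤ) m, delta d m s ^ 2 := by
  have hδ₀ : delta d m 0 = 1 := (delta_zero d m).trans hnorm
  have hδ : ∑ s ∈ range m, delta d m (s + 1 : ℕ) = -(1 / 2) := by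
    have h := sum_Icc_delta_eq_sq_sum d m
    rw [sum_Icc_eq_add_two_nsmul_of_even (delta_neg d m), hδ₀, hsum, nsmul_eq_mul] at h
    linear_combination h / 2
  have hCS := sq_sum_le_card_mul_sum_sq (s := range m) (f := fun s ↦ delta d m (s + 1 : ℕ))
  rw [hδ, card_range] at hCS
  have hm' : (0 : ℝ) < m := by exact_mod_cast hm
  have hbound : 1 / (2 * m) ≤ 2 * ∑ s ∈ range m, delta d m (s + 1 : ℕ) ^ 2 := by
    rw [div_le_iff₀ (by positivity)]
    nlinarith
  rw [sum_Icc_sq_delta, hδ₀]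
  linarith

/-- the sequence `d_0 = (1+√5)/4`, `d_1 = -1/2`, `d_2 = (1-√5)/4` is a
normalized 2nd-order difference sequence; `δ_1 = d_1 d_0 + d_2 d_1 = -1/4` and
`δ_2 = d_2 d_0 = -1/4`, so `Δ_2 = ∑_{s=-2}^{2} δ_s² = 1 + 1/4`, the minimal possible
value of `Δ_2` among normalized 2nd-order difference sequences. -/
theorem stmt16 (d : ℕ → ℝ)
    (hd0 : d 0 = (1 + Real.sqrt 5) / 4)
    (hd1 : d 1 = -(1 / 2))
    (hd2 : d 2 = (1 - Real.sqrt 5) / 4) :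
    d 0 + d 1 + d 2 = 0 ∧
    d 0 ^ 2 + d 1 ^ 2 + d 2 ^ 2 = 1 ∧
    delta d 2 1 = d 1 * d 0 + d 2 * d 1 ∧ delta d 2 1 = -(1 / 4) ∧
    delta d 2 2 = d 2 * d 0 ∧ delta d 2 2 = -(1 / 4) ∧
    (∑ s ∈ Finset.Icc (-2 : ℤ) 2, (delta d 2 s) ^ 2 = 1 + 1 / 4) ∧
    (∀ e : ℕ → ℝ, ∑ j ∈ Finset.range 3, e j = 0 →
      ∑ j ∈ Finset.range 3, (e j) ^ 2 = 1 →
      1 + 1 / 4 ≤ ∑ s ∈ Finset.Icc (-2 : ℤ) 2, (delta e 2 s) ^ 2) := by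
  have h5 : Real.sqrt 5 ^ 2 = 5 := Real.sq_sqrt (by norm_num)
  have hδ₁ : delta d 2 1 = d 1 * d 0 + d 2 * d 1 := by
    simpa [sum_Icc_succ_top] using delta_natCast d 2 (s := 1) (by norm_num)
  have hδ₂ : delta d 2 2 = d 2 * d 0 := by
    simpa using delta_natCast d 2 (s := 2) le_rfl
  have hnorm : d 0 ^ 2 + d 1 ^ 2 + d 2 ^ 2 = 1 := by
    rw [hd0, hd1, hd2]; linear_combination h5 / 8
  have hδ₁' : delta d 2 1 = -(1 / 4) := by rw [hδ₁, hd0, hd1, hd2]; ring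
  have hδ₂' : delta d 2 2 = -(1 / 4) := by rw [hδ₂, hd0, hd2]; linear_combination -h5 / 16
  refine ⟨by rw [hd0, hd1, hd2]; ring, hnorm, hδ₁, hδ₁', hδ₂, hδ₂', ?_, fun e he_sum he_norm ↦ ?_⟩
  · have hΔ := sum_Icc_sq_delta d 2
    norm_num [sum_range_succ, delta_zero, hδ₁', hδ₂'] at hΔ
    rw [hΔ, hnorm]
    norm_num
  · convert one_add_inv_two_mul_le_sum_sq_delta (m := 2) (by norm_num) he_sum he_norm
      using 2 <;> norm_num
end
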